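/- arXiv:2504.09230 — 6 statements merged into one kernel-verified Lean document; each statement's English description precedes it below -/
import Mathlib

section
/- Let γ : ℝ → ℝ be strictly increasing with γ(0) = 0, and let h : ℝ → ℝ be differentiable with h'(t) ≥ −γ(h(t)) for all t ∈ ℝ. If h(t₁) ≥ 0 for some t₁ ∈ ℝ, then h(t) ≥ 0 for all t ≥ t₁ (forward invariance of the set where h ≥ 0). -/
/-- Forward invariance of the superlevel set {h ≥ 0} under the control barrier
function condition ḣ ≥ −γ(h), where γ is an extended class K function. -/
theorem stmt_4 (γ h : ℝ → ℝ) (hγ : StrictMono γ) (hγ0 : γ 0 = 0)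
    (hdiff : Differentiable ℝ h)
    (hineq : ∀ t, -γ (h t) ≤ deriv h t)
    (t₁ : ℝ) (h₁ : 0 ≤ h t₁) :
    ∀ t, t₁ ≤ t → 0 ≤ h t := by
  by_contra hc
  push_neg at hc
  obtain ⟨t₂, ht₁₂, ht₂⟩ := hc
  set S : Set ℝ := Set.Icc t₁ t₂ ∩ {t | 0 ≤ h t} with hS
  have hSne : S.Nonempty := ⟨t₁, ⟨le_refl _, ht₁₂⟩, h₁⟩
  have hSbdd : BddAbove S := ⟨t₂, fun x hx => hx.1.2⟩
  set s := sSup S with hs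
  have hSclosed : IsClosed S :=
    isClosed_Icc.inter (isClosed_le continuous_const hdiff.continuous)
  have hsS : s ∈ S := hSclosed.csSup_mem hSne hSbdd
  have hs2 : s ≤ t₂ := hsS.1.2
  have hhs : 0 ≤ h s := hsS.2
  have hst₂ : s < t₂ := lt_of_le_of_ne hs2 (fun he => by rw [he] at hhs; linarith)
  -- on (s, t₂], h < 0
  have hneg : ∀ t ∈ Set.Ioc s t₂, h t < 0 := by
    intro t ht
    by_contra hge
    push_neg at hge
    have : t ∈ S := ⟨⟨hsS.1.1.trans ht.1.le, ht.2⟩, hge⟩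
    exact absurd (le_csSup hSbdd this) (not_le.mpr ht.1)
  have hmono : StrictMonoOn h (Set.Icc s t₂) := by
    apply strictMonoOn_of_deriv_pos (convex_Icc s t₂) hdiff.continuous.continuousOn
    intro t ht
    rw [interior_Icc] at ht
    have hht : h t < 0 := hneg t ⟨ht.1, ht.2.le⟩
    have : γ (h t) < 0 := by
      have := hγ hht
      rwa [hγ0] at this
    linarith [hineq t]
  have := hmono (Set.left_mem_Icc.mpr hs2) (Set.right_mem_Icc.mpr hs2) hst₂
  linarith
end

section
/- Let n ≥ 1, r > 0, and let γ : ℝ → ℝ be strictly increasing with γ(0) = 0. Let x_i, x_j : ℝ → ℝⁿ be differentiable trajectories such that at every time t with x_i(t) ≠ x_j(t), the control barrier function condition ⟨x_i(t) − x_j(t), x_i'(t) − x_j'(t)⟩ / ‖x_i(t) − x_j(t)‖ ≥ −γ(‖x_i(t) − x_j(t)‖ − r) holds. If ‖x_i(0) − x_j(0)‖ ≥ r, then ‖x_i(t) − x_j(t)‖ ≥ r for all t ≥ 0 (inter-robot collision avoidance is guaranteed for all time). -/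
/-!
Set `x = xᵢ - xⱼ`. While the robots are closer than `r`, the extended class `K` function makes
`-γ(‖x‖ - r)` positive, so the barrier condition forces `⟪x, x'⟫ ≥ 0`: the squared distance
`‖x‖²` cannot decrease inside the ball of radius `r`. A fencing argument then shows that `‖x‖²`,
starting at or above `r²`, never drops below `r²`.
-/

open Set

theorem const_le_image_of_deriv_right_nonneg_of_lt {g g' : ℝ → ℝ} {a b c : ℝ}
    (hg : ContinuousOn g (Icc a b)) (hg' : ∀ t ∈ Ico a b, HasDerivWithinAt g (g' t) (Ici t) t)
    (ha : c ≤ g a) (bound : ∀ t ∈ Ico a b, g t < c → 0 ≤ g' t) :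
    ∀ ⦃t⦄, t ∈ Icc a b → c ≤ g t := by
  intro t ht
  refine le_of_forall_pos_le_add fun ε hε => ?_
  have hab : 0 < 1 + (b - a) := by linarith [ht.1.trans ht.2]
  set δ := ε / (1 + (b - a))
  have hδ : 0 < δ := div_pos hε hab
  -- Fencing needs a strict inequality at contact points, so compare `g` with the strictly
  -- descending line `c - δ (1 + (s - a))`, which stays within `ε` of `c` on `[a, b]`.
  have hline : ∀ s, HasDerivAt (fun s => c - δ * (1 + (s - a))) (-(δ * 1)) s := fun s =>
    (((hasDerivAt_id s).sub_const a).const_add 1 |>.const_mul δ).const_sub c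
  have hfence := image_le_of_deriv_right_lt_deriv_boundary'
    (fun s _ => (hline s).continuousAt.continuousWithinAt) (fun s _ => (hline s).hasDerivWithinAt)
    (by nlinarith) hg hg' (fun s hs hgs => by
      have : g s < c := by rw [← hgs]; nlinarith [hs.1]
      linarith [bound s hs this]) ht
  have hεδ : δ * (1 + (t - a)) ≤ ε := by
    calc δ * (1 + (t - a)) ≤ δ * (1 + (b - a)) := by gcongr; exact ht.2
      _ = ε := div_mul_cancel₀ ε hab.ne'
  linarith

theorem le_norm_of_inner_deriv_nonneg {E : Type*} [NormedAddCommGroup E] [InnerProductSpace ℝ E]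
    {x x' : ℝ → E} {r : ℝ} (hr : 0 ≤ r) (hx : ∀ t, HasDerivAt x (x' t) t)
    (hin : ∀ t, ‖x t‖ < r → 0 ≤ inner ℝ (x t) (x' t)) (h0 : r ≤ ‖x 0‖) :
    ∀ t, 0 ≤ t → r ≤ ‖x t‖ := by
  intro t ht
  have hsq : ∀ s, HasDerivAt (‖x ·‖ ^ 2) (2 * inner ℝ (x s) (x' s)) s := fun s => (hx s).norm_sq
  have hfence := const_le_image_of_deriv_right_nonneg_of_lt (c := r ^ 2)
    (fun s _ => (hsq s).continuousAt.continuousWithinAt) (fun s _ => (hsq s).hasDerivWithinAt)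
    (pow_le_pow_left₀ hr h0 2)
    (fun s _ hs => mul_nonneg zero_le_two (hin s (lt_of_pow_lt_pow_left₀ 2 hr hs)))
    (right_mem_Icc.2 ht)
  exact le_of_pow_le_pow_left₀ two_ne_zero (norm_nonneg _) hfence

theorem stmt_13_general (n : ℕ) (r : ℝ) (hr : 0 < r)
    (γ : ℝ → ℝ) (hγ : StrictMono γ) (hγ0 : γ 0 = 0)
    (xi xj : ℝ → EuclideanSpace ℝ (Fin n))
    (hxi : Differentiable ℝ xi) (hxj : Differentiable ℝ xj)
    (hcbf : ∀ t, xi t ≠ xj t →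
      -γ (‖xi t - xj t‖ - r) ≤
        (inner ℝ (xi t - xj t) (deriv xi t - deriv xj t) : ℝ) / ‖xi t - xj t‖)
    (h0 : r ≤ ‖xi 0 - xj 0‖) :
    ∀ t, 0 ≤ t → r ≤ ‖xi t - xj t‖ := by
  refine le_norm_of_inner_deriv_nonneg (x := xi - xj) hr.le
    (fun t => (hxi t).hasDerivAt.sub (hxj t).hasDerivAt) (fun t hlt => ?_) h0
  simp only [Pi.sub_apply] at hlt ⊢
  rcases eq_or_ne (xi t) (xj t) with heq | hne
  · simp [heq]
  · have hγneg : γ (‖xi t - xj t‖ - r) < 0 := hγ0 ▸ hγ (sub_neg.2 hlt)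
    have hquot := (neg_pos.2 hγneg).trans_le (hcbf t hne)
    exact (div_pos_iff_of_pos_right (norm_pos_iff.2 (sub_ne_zero.2 hne))).1 hquot |>.le

/-- Inter-robot collision avoidance (property P3): under the collision
avoidance CBF condition, two robots initially at distance at least r stay at
distance at least r for all t ≥ 0. -/
theorem stmt_13 (n : ℕ) (hn : 1 ≤ n) (r : ℝ) (hr : 0 < r)
    (γ : ℝ → ℝ) (hγ : StrictMono γ) (hγ0 : γ 0 = 0)
    (xi xj : ℝ → EuclideanSpace ℝ (Fin n))
    (hxi : Differentiable ℝ xi) (hxj : Differentiable ℝ xj)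
    (hcbf : ∀ t, xi t ≠ xj t →
      -γ (‖xi t - xj t‖ - r) ≤
        (inner ℝ (xi t - xj t) (deriv xi t - deriv xj t) : ℝ) / ‖xi t - xj t‖)
    (h0 : r ≤ ‖xi 0 - xj 0‖) :
    ∀ t, 0 ≤ t → r ≤ ‖xi t - xj t‖ :=
  stmt_13_general n r hr γ hγ hγ0 xi xj hxi hxj hcbf h0
end

section
/- Let n ≥ 1, r > 0, r_o ≥ 0, and let γ : ℝ → ℝ be strictly increasing with γ(0) = 0. Let x_o ∈ ℝⁿ be a fixed obstacle center and let x : ℝ → ℝⁿ be a differentiable trajectory such that at every time t with x(t) ≠ x_o, the control barrier function condition ⟨x(t) − x_o, x'(t)⟩ / ‖x(t) − x_o‖ ≥ −γ(‖x(t) − x_o‖ − r − r_o) holds. If ‖x(0) − x_o‖ ≥ r + r_o, then ‖x(t) − x_o‖ ≥ r + r_o for all t ≥ 0 (obstacle avoidance is guaranteed for all time). -/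
/-!
Let `h t = ‖x t - xo‖` and `c = r + ro`. Wherever `0 < h t < c`, the barrier condition
together with `γ (h t - c) < γ 0 = 0` makes `h' t = ⟪x t - xo, x' t⟫ / h t` strictly positive.
So `h` is strictly increasing while it is in the band `(0, c)`; in particular it can never
drop below `c` after the last time it was at least `c`.
-/

open Set Topology
open scoped RealInnerProductSpace

theorem HasDerivAt.norm {F : Type*} [NormedAddCommGroup F] [InnerProductSpace ℝ F]
    {f : ℝ → F} {f' : F} {t : ℝ} (hf : HasDerivAt f f' t) (h0 : f t ≠ 0) :
    HasDerivAt (fun s => ‖f s‖) (⟪f t, f'⟫ / ‖f t‖) t := by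
  have hpos : 0 < ‖f t‖ := norm_pos_iff.mpr h0
  convert hf.norm_sq.sqrt (by positivity) using 1
  · simp [Real.sqrt_sq (norm_nonneg _)]
  · rw [Real.sqrt_sq hpos.le]
    field_simp

theorem le_image_of_deriv_pos_of_mem_Ioo {f : ℝ → ℝ} {a b c d : ℝ}
    (hf : ContinuousOn f (Icc a b)) (hdc : d < c) (ha : c ≤ f a)
    (hderiv : ∀ t ∈ Ioo a b, f t ∈ Ioo d c → 0 < deriv f t) :
    ∀ t ∈ Icc a b, c ≤ f t := by
  intro t₁ ht₁
  by_contra! hlt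
  set S := Icc a t₁ ∩ {t | c ≤ f t}
  have hSbdd : BddAbove S := ⟨t₁, fun _ h => h.1.2⟩
  have hSclosed : IsClosed S :=
    (hf.mono (Icc_subset_Icc_right ht₁.2)).preimage_isClosed_of_isClosed isClosed_Icc isClosed_Ici
  set s := sSup S
  obtain ⟨⟨has, hst₁⟩, hcs : c ≤ f s⟩ : s ∈ S :=
    hSclosed.csSup_mem ⟨a, ⟨le_rfl, ht₁.1⟩, ha⟩ hSbdd
  replace hst₁ : s < t₁ := hst₁.lt_of_ne fun h => (h ▸ hcs).not_gt hlt
  have hbelow : ∀ t ∈ Ioc s t₁, f t < c := fun t ht => by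
    by_contra! hge
    exact ht.1.not_ge (le_csSup hSbdd ⟨⟨has.trans ht.1.le, ht.2⟩, hge⟩)
  obtain ⟨t₂, ⟨hst₂, ht₂t₁⟩, habove⟩ : ∃ t₂ ∈ Ioc s t₁, ∀ t ∈ Icc s t₂, d < f t := by
    have hev : {t | d < f t} ∈ 𝓝[≥] s :=
      ((hf s ⟨has, hst₁.le.trans ht₁.2⟩).mono_of_mem_nhdsWithin
        (Icc_mem_nhdsGE_of_mem ⟨has, hst₁.trans_le ht₁.2⟩))
        (lt_mem_nhds (hdc.trans_le hcs))
    obtain ⟨u, hsu, hu⟩ := mem_nhdsGE_iff_exists_Icc_subset.mp hev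
    exact ⟨min u t₁, ⟨lt_min hsu hst₁, min_le_right _ _⟩,
      fun t ht => hu ⟨ht.1, ht.2.trans (min_le_left _ _)⟩⟩
  have hmono : StrictMonoOn f (Icc s t₂) := by
    refine strictMonoOn_of_deriv_pos (convex_Icc s t₂)
      (hf.mono (Icc_subset_Icc has (ht₂t₁.trans ht₁.2))) fun t ht => ?_
    rw [interior_Icc] at ht
    exact hderiv t ⟨has.trans_lt ht.1, ht.2.trans_le (ht₂t₁.trans ht₁.2)⟩
      ⟨habove t (Ioo_subset_Icc_self ht), hbelow t ⟨ht.1, ht.2.le.trans ht₂t₁⟩⟩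
  have hincr := hmono ⟨le_rfl, hst₂.le⟩ ⟨hst₂.le, le_rfl⟩ hst₂
  linarith [hbelow t₂ ⟨hst₂, ht₂t₁⟩]

theorem stmt_14_general (n : ℕ) (r ro : ℝ)
    (γ : ℝ → ℝ) (hγ : StrictMono γ) (hγ0 : γ 0 = 0)
    (xo : EuclideanSpace ℝ (Fin n)) (x : ℝ → EuclideanSpace ℝ (Fin n))
    (hx : Differentiable ℝ x)
    (hcbf : ∀ t, x t ≠ xo →
      -γ (‖x t - xo‖ - r - ro) ≤
        (inner ℝ (x t - xo) (deriv x t) : ℝ) / ‖x t - xo‖)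
    (h0 : r + ro ≤ ‖x 0 - xo‖) :
    ∀ t, 0 ≤ t → r + ro ≤ ‖x t - xo‖ := by
  intro t ht
  rcases le_or_gt (r + ro) 0 with hc | hc
  · exact hc.trans (norm_nonneg _)
  refine le_image_of_deriv_pos_of_mem_Ioo (f := fun s => ‖x s - xo‖)
    (hx.continuous.sub continuous_const).norm.continuousOn hc h0
    (fun s _ ⟨hpos, hlt⟩ => ?_) t ⟨ht, le_rfl⟩
  have hne : x s ≠ xo := sub_ne_zero.mp (norm_pos_iff.mp hpos)
  rw [((hx s).hasDerivAt.sub_const xo).norm (sub_ne_zero.mpr hne) |>.deriv]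
  have hγneg : γ (‖x s - xo‖ - r - ro) < 0 := hγ0 ▸ hγ (by linarith)
  linarith [hcbf s hne]

/-- Obstacle avoidance (property P4): under the obstacle-avoidance CBF
condition, a robot initially at distance at least r + r_o from the obstacle
center x_o stays at distance at least r + r_o for all t ≥ 0. -/
theorem stmt_14 (n : ℕ) (hn : 1 ≤ n) (r ro : ℝ) (hr : 0 < r) (hro : 0 ≤ ro)
    (γ : ℝ → ℝ) (hγ : StrictMono γ) (hγ0 : γ 0 = 0)
    (xo : EuclideanSpace ℝ (Fin n)) (x : ℝ → EuclideanSpace ℝ (Fin n))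
    (hx : Differentiable ℝ x)
    (hcbf : ∀ t, x t ≠ xo →
      -γ (‖x t - xo‖ - r - ro) ≤
        (inner ℝ (x t - xo) (deriv x t) : ℝ) / ‖x t - xo‖)
    (h0 : r + ro ≤ ‖x 0 - xo‖) :
    ∀ t, 0 ≤ t → r + ro ≤ ‖x t - xo‖ :=
  stmt_14_general n r ro γ hγ hγ0 xo x hx hcbf h0
end

section
/- Let E be a real inner product space, let N, m, M ≥ 1, and let γ : ℝ → ℝ be strictly increasing with γ(0) = 0. Fix a robot index i ∈ {1,…,N}, its position x ∈ E, a vector v̂ ∈ E with ‖v̂‖ ≤ u_max for some u_max > 0, a penalty parameter ϖ ≥ 0, desired points x_1^d, …, x_N^d ∈ E with x ≠ x_k^d for all k, neighbor positions x_1, …, x_m ∈ E with ‖x − x_j‖ ≥ r for all j (where r > 0), and obstacle centers x_1^o, …, x_M^o ∈ E with radii r_l^o ≥ 0 satisfying ‖x − x_l^o‖ ≥ r + r_l^o for all l. Then there exist u ∈ E, δ ∈ ℝ^N with all entries nonnegative, and an allocation row vector α_i ∈ {0,1}^N with exactly one entry equal to 1 (namely u = v̂, α_i the i-th standard basis vector,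 and δ_k sufficiently large), such that all constraints of the CATE optimization hold: (i) for every k ∈ {1,…,N}: ⟨(x − x_k^d)/‖x − x_k^d‖, u − v̂⟩ + γ(‖x − x_k^d‖) − (1 − α_{i,k})·ϖ − δ_k ≤ 0; (ii) for every neighbor j: ⟨−(x − x_j)/‖x − x_j‖, u − v̂⟩ + γ(r − ‖x − x_j‖) ≤ 0; (iii) for every obstacle l: ⟨−(x − x_l^o)/‖x − x_l^o‖, u − v̂⟩ + γ(r + r_l^o − ‖x − x_l^o‖) ≤ 0; (iv) Σ_k α_{i,k} = 1; and (v) ‖u‖ ≤ u_max. -/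
/-! The nominal input `u = v̂` makes every inner-product term vanish. The collision and obstacle
barriers are then `γ` evaluated at a nonpositive number, hence nonpositive, and the slack
`δ_k = max 0 (γ ‖x - x_k^d‖)` absorbs the convergence barriers. -/

lemma Monotone.map_nonpos_of_nonpos {α β : Type*} [Preorder α] [Zero α] [Preorder β] [Zero β]
    {γ : α → β} (hγ : Monotone γ) (hγ0 : γ 0 = 0) {t : α}
    (ht : t ≤ 0) : γ t ≤ 0 :=
  hγ0 ▸ hγ ht

lemma Pi.single_apply_eq_zero_or_eq {ι M : Type*} [DecidableEq ι] [Zero M] (i k : ι) (a : M) :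
    (Pi.single i a : ι → M) k = 0 ∨ (Pi.single i a : ι → M) k = a := by
  rw [Pi.single_apply]
  split_ifs <;> simp

lemma inner_sub_self_add {E : Type*} [NormedAddCommGroup E] [InnerProductSpace ℝ E]
    (w v : E) (c : ℝ) : inner ℝ w (v - v) + c = c := by
  rw [sub_self, inner_zero_right, zero_add]

theorem stmt_15_general {E : Type*} [NormedAddCommGroup E] [InnerProductSpace ℝ E]
    (N m M : ℕ)
    (γ : ℝ → ℝ) (hγ : StrictMono γ) (hγ0 : γ 0 = 0)
    (i : Fin N) (x vhat : E) (umax : ℝ)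
    (hvhat : ‖vhat‖ ≤ umax) (ϖ : ℝ) (hϖ : 0 ≤ ϖ) (r : ℝ)
    (xd : Fin N → E)
    (xn : Fin m → E) (hxn : ∀ j, r ≤ ‖x - xn j‖)
    (xo : Fin M → E) (ro : Fin M → ℝ)
    (hxo : ∀ l, r + ro l ≤ ‖x - xo l‖) :
    ∃ (u : E) (δ : Fin N → ℝ) (αrow : Fin N → ℝ),
      (∀ k, 0 ≤ δ k) ∧
      (∀ k, αrow k = 0 ∨ αrow k = 1) ∧
      (∀ k, (inner ℝ (‖x - xd k‖⁻¹ • (x - xd k)) (u - vhat) : ℝ) +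
        γ ‖x - xd k‖ - (1 - αrow k) * ϖ - δ k ≤ 0) ∧
      (∀ j, (inner ℝ (-(‖x - xn j‖⁻¹ • (x - xn j))) (u - vhat) : ℝ) +
        γ (r - ‖x - xn j‖) ≤ 0) ∧
      (∀ l, (inner ℝ (-(‖x - xo l‖⁻¹ • (x - xo l))) (u - vhat) : ℝ) +
        γ (r + ro l - ‖x - xo l‖) ≤ 0) ∧
      (∑ k, αrow k = 1) ∧
      ‖u‖ ≤ umax := by
  have hα (k : Fin N) := Pi.single_apply_eq_zero_or_eq i k (1 : ℝ)
  refine ⟨vhat, fun k => max 0 (γ ‖x - xd k‖), Pi.single i 1, fun k => le_max_left _ _, hα,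
    fun k => ?_, fun j => ?_, fun l => ?_, by simp, hvhat⟩
  · have hpenalty : 0 ≤ (1 - (Pi.single i 1 : Fin N → ℝ) k) * ϖ := by
      rcases hα k with h | h <;> simp [h, hϖ]
    rw [inner_sub_self_add]
    linarith [le_max_right 0 (γ ‖x - xd k‖)]
  · rw [inner_sub_self_add]
    exact hγ.monotone.map_nonpos_of_nonpos hγ0 (by linarith [hxn j])
  · rw [inner_sub_self_add]
    exact hγ.monotone.map_nonpos_of_nonpos hγ0 (by linarith [hxo l])

/-- Feasibility guarantee of the CATE optimization: under Assumptions A3 and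
A4, there always exist an input u, nonnegative slack variables δ, and a 0-1
allocation row with exactly one entry equal to 1 satisfying all the CBF,
allocation, and input-limit constraints (e.g. u = v̂, α_i the i-th standard
basis vector, and δ sufficiently large). -/
theorem stmt_15 {E : Type*} [NormedAddCommGroup E] [InnerProductSpace ℝ E]
    (N m M : ℕ) (hN : 1 ≤ N) (hm : 1 ≤ m) (hM : 1 ≤ M)
    (γ : ℝ → ℝ) (hγ : StrictMono γ) (hγ0 : γ 0 = 0)
    (i : Fin N) (x vhat : E) (umax : ℝ) (humax : 0 < umax)
    (hvhat : ‖vhat‖ ≤ umax) (ϖ : ℝ) (hϖ : 0 ≤ ϖ) (r : ℝ) (hr : 0 < r)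
    (xd : Fin N → E) (hxd : ∀ k, x ≠ xd k)
    (xn : Fin m → E) (hxn : ∀ j, r ≤ ‖x - xn j‖)
    (xo : Fin M → E) (ro : Fin M → ℝ) (hro : ∀ l, 0 ≤ ro l)
    (hxo : ∀ l, r + ro l ≤ ‖x - xo l‖) :
    ∃ (u : E) (δ : Fin N → ℝ) (αrow : Fin N → ℝ),
      (∀ k, 0 ≤ δ k) ∧
      (∀ k, αrow k = 0 ∨ αrow k = 1) ∧
      (∀ k, (inner ℝ (‖x - xd k‖⁻¹ • (x - xd k)) (u - vhat) : ℝ) +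
        γ ‖x - xd k‖ - (1 - αrow k) * ϖ - δ k ≤ 0) ∧
      (∀ j, (inner ℝ (-(‖x - xn j‖⁻¹ • (x - xn j))) (u - vhat) : ℝ) +
        γ (r - ‖x - xn j‖) ≤ 0) ∧
      (∀ l, (inner ℝ (-(‖x - xo l‖⁻¹ • (x - xo l))) (u - vhat) : ℝ) +
        γ (r + ro l - ‖x - xo l‖) ≤ 0) ∧
      (∑ k, αrow k = 1) ∧
      ‖u‖ ≤ umax :=
  stmt_15_general N m M γ hγ hγ0 i x vhat umax hvhat ϖ hϖ r xd xn hxn xo ro hxo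
end

section
/- Let n ≥ 1 and let γ : ℝ → ℝ be strictly increasing with γ(0) = 0. Let x, x_d : [0, ∞) → ℝⁿ be differentiable trajectories such that at every time t with x(t) ≠ x_d(t), the inequality ⟨x(t) − x_d(t), x'(t) − x_d'(t)⟩ ≤ −γ(‖x(t) − x_d(t)‖)·‖x(t) − x_d(t)‖ holds. Then ‖x(t) − x_d(t)‖ → 0 as t → ∞ (the robot asymptotically converges to its allocated desired point). -/
/-!
Put `V = ‖x - x_d‖²`. The CBF inequality makes `V' = 2⟪x - x_d, x' - x_d'⟫` negative wherever
`V > 0`, and uniformly so on `{V ≥ ε}`: there `‖x - x_d‖ ≥ √ε` and `V' ≤ -2 γ(√ε) √ε`. Where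
`V = 0` the inequality says nothing, but there `V` is at its minimum, so `V' = 0`. Hence `V` is
antitone, and it cannot stay above `ε` forever, since a derivative `≤ -δ` would drive it below `0`
in time `V(0)/δ`. So `V → 0`.
-/

open Filter Set Topology

theorem image_sub_le_mul_sub_of_hasDerivAt_Ici {f f' : ℝ → ℝ} {a C : ℝ}
    (hf : ∀ t, a ≤ t → HasDerivAt f (f' t) t) (hf'C : ∀ t, a < t → f' t ≤ C)
    {s t : ℝ} (hs : a ≤ s) (hst : s ≤ t) : f t - f s ≤ C * (t - s) := by
  refine (convex_Ici a).image_sub_le_mul_sub_of_deriv_le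
    (fun u hu => (hf u hu).continuousAt.continuousWithinAt) ?_ ?_ s hs t (hs.trans hst) hst
  · rw [interior_Ici]
    exact fun u hu => (hf u (le_of_lt hu)).differentiableAt.differentiableWithinAt
  · rw [interior_Ici]
    exact fun u hu => (hf u (le_of_lt hu)).deriv ▸ hf'C u hu

theorem tendsto_atTop_zero_of_hasDerivAt_le_neg {V V' : ℝ → ℝ} (hV₀ : ∀ t, 0 ≤ V t)
    (hV : ∀ t, 0 ≤ t → HasDerivAt V (V' t) t)
    (hV' : ∀ ε > 0, ∃ δ > 0, ∀ t, 0 < t → ε ≤ V t → V' t ≤ -δ) :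
    Tendsto V atTop (𝓝 0) := by
  have hV'_nonpos : ∀ t, 0 < t → V' t ≤ 0 := by
    intro t ht
    rcases (hV₀ t).eq_or_lt with hVt | hVt
    · have hmin : IsLocalMin V t := Eventually.of_forall fun s => hVt ▸ hV₀ s
      exact (hmin.hasDerivAt_eq_zero (hV t ht.le)).le
    · obtain ⟨δ, hδ, hle⟩ := hV' (V t) hVt
      linarith [hle t ht le_rfl]
  have hanti : ∀ s t, 0 ≤ s → s ≤ t → V t ≤ V s := fun s t hs hst => by
    linarith [image_sub_le_mul_sub_of_hasDerivAt_Ici hV hV'_nonpos hs hst]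
  have hdips : ∀ ε > 0, ∃ T, 0 ≤ T ∧ V T < ε := by
    intro ε hε
    by_contra! hstays
    obtain ⟨δ, hδ, hle⟩ := hV' ε hε
    set T := V 0 / δ + 1
    have hT : 0 ≤ T := add_nonneg (div_nonneg (hV₀ 0) hδ.le) zero_le_one
    have hdecay := image_sub_le_mul_sub_of_hasDerivAt_Ici hV
      (fun t ht => hle t ht (hstays t ht.le)) le_rfl hT
    have hδT : δ * T = V 0 + δ := by rw [mul_add, mul_div_cancel₀ _ hδ.ne', mul_one]
    linarith [hV₀ T]
  refine tendsto_order.2 ⟨fun a ha => Eventually.of_forall fun t => ha.trans_le (hV₀ t),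
    fun ε hε => ?_⟩
  obtain ⟨T, hT, hVT⟩ := hdips ε hε
  filter_upwards [eventually_ge_atTop T] with t ht
  exact (hanti T t hT ht).trans_lt hVT

theorem tendsto_norm_atTop_zero_of_inner_le_neg {F : Type*} [NormedAddCommGroup F]
    [InnerProductSpace ℝ F] {e e' : ℝ → F} {γ : ℝ → ℝ} (hγ : Monotone γ)
    (hγ_pos : ∀ r, 0 < r → 0 < γ r) (he : ∀ t, 0 ≤ t → HasDerivAt e (e' t) t)
    (hcbf : ∀ t, 0 ≤ t → e t ≠ 0 → inner ℝ (e t) (e' t) ≤ -γ ‖e t‖ * ‖e t‖) :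
    Tendsto (fun t => ‖e t‖) atTop (𝓝 0) := by
  have hV : Tendsto (fun t => ‖e t‖ ^ 2) atTop (𝓝 0) := by
    refine tendsto_atTop_zero_of_hasDerivAt_le_neg (fun t => by positivity)
      (fun t ht => (he t ht).norm_sq) fun ε hε => ?_
    have hrε : 0 < √ε := Real.sqrt_pos.2 hε
    refine ⟨2 * (γ √ε * √ε), by have := hγ_pos _ hrε; positivity, fun t ht hεt => ?_⟩
    have hr : √ε ≤ ‖e t‖ := Real.sqrt_le_iff.2 ⟨norm_nonneg _, hεt⟩
    have het : e t ≠ 0 := norm_pos_iff.1 (hrε.trans_le hr)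
    have hγr : γ √ε * √ε ≤ γ ‖e t‖ * ‖e t‖ :=
      mul_le_mul (hγ hr) hr hrε.le ((hγ_pos _ hrε).le.trans (hγ hr))
    linarith [hcbf t ht.le het]
  simpa using hV.sqrt

open Filter in
theorem stmt_16_general (n : ℕ)
    (γ : ℝ → ℝ) (hγ : StrictMono γ) (hγ0 : γ 0 = 0)
    (x xd : ℝ → EuclideanSpace ℝ (Fin n))
    (hx : ∀ t, 0 ≤ t → DifferentiableAt ℝ x t)
    (hxd : ∀ t, 0 ≤ t → DifferentiableAt ℝ xd t)
    (hcbf : ∀ t, 0 ≤ t → x t ≠ xd t →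
      (inner ℝ (x t - xd t) (deriv x t - deriv xd t) : ℝ) ≤
        -γ (‖x t - xd t‖) * ‖x t - xd t‖) :
    Tendsto (fun t => ‖x t - xd t‖) atTop (nhds 0) :=
  tendsto_norm_atTop_zero_of_inner_le_neg (e' := fun t => deriv x t - deriv xd t) hγ.monotone
    (fun _ hr => hγ0 ▸ hγ hr) (fun t ht => (hx t ht).hasDerivAt.sub (hxd t ht).hasDerivAt)
    fun t ht het => hcbf t ht (sub_ne_zero.1 het)

open Filter in
/-- Asymptotic convergence to the allocated desired point (property P2): under
the desired-point convergence CBF condition with zero slack, the tracking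
error ‖x(t) − x_d(t)‖ tends to 0 as t → ∞. -/
theorem stmt_16 (n : ℕ) (hn : 1 ≤ n)
    (γ : ℝ → ℝ) (hγ : StrictMono γ) (hγ0 : γ 0 = 0)
    (x xd : ℝ → EuclideanSpace ℝ (Fin n))
    (hx : ∀ t, 0 ≤ t → DifferentiableAt ℝ x t)
    (hxd : ∀ t, 0 ≤ t → DifferentiableAt ℝ xd t)
    (hcbf : ∀ t, 0 ≤ t → x t ≠ xd t →
      (inner ℝ (x t - xd t) (deriv x t - deriv xd t) : ℝ) ≤
        -γ (‖x t - xd t‖) * ‖x t - xd t‖) :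
    Tendsto (fun t => ‖x t - xd t‖) atTop (nhds 0) :=
  stmt_16_general n γ hγ hγ0 x xd hx hxd hcbf
end

section
/- Let E be a real inner product space, let γ : ℝ → ℝ be strictly increasing with γ(0) = 0, let ϖ ≥ 0, c > 0, and let x_1^d, …, x_N^d ∈ E be pairwise distinct desired points. Fix k and suppose a robot is exactly at its allocated point, x = x_k^d, with input u = v̂, and suppose γ(‖x − x_q^d‖) ≤ ϖ for all q ≠ k. Then: (a) under the allocation α_{i,k} = 1, α_{i,q} = 0 for q ≠ k, the slack vector δ = 0 satisfies all the desired-point CBF constraints γ(‖x − x_k^d‖) − δ_k ≤ 0 and γ(‖x − x_q^d‖) − δ_q − ϖ ≤ 0 (q ≠ k), so the cost c‖δ‖² + ‖u − v̂‖² attains the value 0; and (b) for any other allocation with α_{i,j} = 1 for some j ≠ k, every slack vector δ satisfying the constraint γ(‖x − x_j^d‖) − δ_j ≤ 0 (with u = v̂) must have δ_j ≥ γ(‖x − x_j^d‖) > 0, so the cost c‖δ‖² + ‖u − v̂‖² is at least c·γ(‖x − x_j^d‖)² > 0. Hence reallocating an already-converged robot to a different desired point strictly increases the optimization cost. -/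
/-- Livelock prevention (core of Lemma 2): for a robot exactly at its
allocated desired point x = x_k^d with input u = v̂, (a) keeping the
allocation k, the zero slack vector satisfies all desired-point CBF
constraints and the cost c‖δ‖² + ‖u − v̂‖² equals 0; while (b) reallocating to
any other desired point j ≠ k forces a slack δ_j ≥ γ(‖x − x_j^d‖) > 0 and
hence a cost at least c·γ(‖x − x_j^d‖)² > 0. -/
theorem stmt_17 {E : Type*} [NormedAddCommGroup E] [InnerProductSpace ℝ E]
    (N : ℕ) (γ : ℝ → ℝ) (hγ : StrictMono γ) (hγ0 : γ 0 = 0)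
    (ϖ c : ℝ) (hϖ : 0 ≤ ϖ) (hc : 0 < c)
    (xd : Fin N → E) (hdist : ∀ k l : Fin N, k ≠ l → xd k ≠ xd l)
    (k : Fin N) (x u vhat : E) (hx : x = xd k) (hu : u = vhat)
    (hpen : ∀ q, q ≠ k → γ ‖x - xd q‖ ≤ ϖ) :
    ((γ ‖x - xd k‖ - (0 : ℝ) ≤ 0) ∧
      (∀ q, q ≠ k → γ ‖x - xd q‖ - 0 - ϖ ≤ 0) ∧
      c * (∑ _q : Fin N, (0 : ℝ) ^ 2) + ‖u - vhat‖ ^ 2 = 0) ∧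
    (∀ j, j ≠ k → 0 < γ ‖x - xd j‖ ∧
      ∀ δ : Fin N → ℝ, γ ‖x - xd j‖ - δ j ≤ 0 →
        γ ‖x - xd j‖ ≤ δ j ∧
        c * γ ‖x - xd j‖ ^ 2 ≤ c * (∑ q, δ q ^ 2) + ‖u - vhat‖ ^ 2 ∧
        0 < c * (∑ q, δ q ^ 2) + ‖u - vhat‖ ^ 2) := by
  subst hx hu
  have hn0 : γ ‖xd k - xd k‖ = 0 := by simp [hγ0]
  refine ⟨⟨by simp [hγ0], fun q hq => by linarith [hpen q hq], by simp⟩, ?_⟩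
  intro j hj
  have hne : xd k ≠ xd j := hdist k j (fun h => hj h.symm)
  have hpos : 0 < γ ‖xd k - xd j‖ := by
    rw [← hγ0]
    exact hγ (by simpa [sub_eq_zero, norm_pos_iff] using hne)
  refine ⟨hpos, fun δ hδ => ?_⟩
  have h1 : γ ‖xd k - xd j‖ ≤ δ j := by linarith
  have h2 : δ j ^ 2 ≤ ∑ q, δ q ^ 2 :=
    Finset.single_le_sum (fun q _ => sq_nonneg (δ q)) (Finset.mem_univ j)
  have h3 : γ ‖xd k - xd j‖ ^ 2 ≤ δ j ^ 2 :=
    pow_le_pow_left₀ hpos.le h1 2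
  have h4 : c * γ ‖xd k - xd j‖ ^ 2 ≤ c * (∑ q, δ q ^ 2) := by
    exact mul_le_mul_of_nonneg_left (h3.trans h2) hc.le
  have h5 : 0 < c * γ ‖xd k - xd j‖ ^ 2 := mul_pos hc (pow_pos hpos 2)
  refine ⟨h1, by simpa using h4, by simp; linarith⟩
end
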